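/- arXiv:2408.16348 — 3 statements merged into one kernel-verified Lean document; each statement's English description precedes it below -/
import Mathlib

section
/- Let f₁, f₂ : ℝ³ → ℝ≥0 be measurable functions in L² such that the ξ-support of fⱼ is contained in an interval Iⱼ of length at most N_min, the η-support satisfies the group-velocity separation |η₁/ξ₁ − η₂/ξ₂| ≥ c·D for all points in the supports, and the τ-support of fᵢ is contained in {|τ − ω_α(ξ,η)| ≤ Lᵢ}. Then ‖f₁ ∗ f₂‖_{L²(ℝ³)} ≤ C · N_min^{1/2} · L_min^{1/2} · (L_max/D)^{1/2} · ‖f₁‖_{L²} ‖f₂‖_{L²}, where L_min = min(L₁,L₂), L_max = max(L₁,L₂). -/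
/-!
For fixed `x`, Cauchy–Schwarz bounds `|f₁ ∗ f₂ (x)|²` by `|E_x| · (|f₁|² ∗ |f₂|²)(x)`, where
`E_x = {y | f₁ y ≠ 0 ∧ f₂ (x - y) ≠ 0}`; integrating in `x` gives
`‖f₁ ∗ f₂‖₂² ≤ (sup_x |E_x|) ‖f₁‖₂² ‖f₂‖₂²`. The measure of `E_x`, `x = (τ₀, ξ₀, η₀)`, is bounded
by slicing: `ξ` lies in an interval of length `N_min`; for fixed `(ξ, η)` each modulation
constraint confines `τ` to an interval, of length `2 L_min` for the shorter one; for fixed `ξ`,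
adding the two constraints gives `|ω(ξ, η) + ω(ξ₀ - ξ, η₀ - η) - τ₀| ≤ L₁ + L₂`, and the left-hand
side is quadratic in `η` with difference quotient a sum of two group-velocity differences
`η/ξ - (η₀ - η)/(ξ₀ - ξ)`, each at least `c D` in size; splitting by their sign, `η` ranges over
two sets of measure at most `(L₁ + L₂) / (c D)` each.
-/

open MeasureTheory

/-- The KP-I dispersion relation. -/
noncomputable def omegaKP (α ξ η : ℝ) : ℝ := ξ * |ξ| ^ α + η ^ 2 / ξ

noncomputable def conv3 (f g : ℝ × ℝ × ℝ → ℝ) (x : ℝ × ℝ × ℝ) : ℝ :=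
  ∫ y, f y * g (x - y)

open Metric Set
open scoped ENNReal

section

variable {α : Type*} [MeasurableSpace α] {μ : Measure α}

theorem lintegral_sq_le_measure_mul_lintegral_sq {F : α → ℝ≥0∞} (hF : AEMeasurable F μ)
    {S : Set α} (hFS : F.support ⊆ S) :
    (∫⁻ x, F x ∂μ) ^ 2 ≤ μ S * ∫⁻ x, F x ^ 2 ∂μ := by
  have hF2S : (fun x => F x ^ 2).support ⊆ S := fun x hx =>
    hFS fun h => hx (by simp [h])
  rw [← setLIntegral_eq_of_support_subset hFS, ← setLIntegral_eq_of_support_subset hF2S,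
    ← setLIntegral_one]
  have holder := ENNReal.lintegral_mul_le_Lp_mul_Lq (μ.restrict S) Real.HolderConjugate.two_two
    aemeasurable_const hF.restrict (f := fun _ => 1)
  simp only [Pi.mul_apply, one_mul, ENNReal.one_rpow] at holder
  calc (∫⁻ x in S, F x ∂μ) ^ 2
      ≤ ((∫⁻ _ in S, 1 ∂μ) ^ (1 / 2 : ℝ) * (∫⁻ x in S, F x ^ (2 : ℝ) ∂μ) ^ (1 / 2 : ℝ)) ^ 2 := by
        gcongr
    _ = (∫⁻ _ in S, 1 ∂μ) * ∫⁻ x in S, F x ^ 2 ∂μ := by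
        simp only [mul_pow, ← ENNReal.rpow_natCast, ← ENNReal.rpow_mul]
        norm_num

theorem eLpNorm_two_pow_two {E : Type*} [ENorm E] (f : α → E) :
    eLpNorm f 2 μ ^ 2 = ∫⁻ x, ‖f x‖ₑ ^ 2 ∂μ := by
  simpa using eLpNorm_nnreal_pow_eq_lintegral (μ := μ) (f := f) (p := 2) two_ne_zero

end

section Convolution

variable {G : Type*} [AddGroup G] [MeasurableSpace G] [MeasurableAdd₂ G] [MeasurableNeg G]
  {μ : Measure G} [SFinite μ] [μ.IsAddRightInvariant]

theorem lintegral_lintegral_mul_sub {F H : G → ℝ≥0∞} (hF : Measurable F) (hH : Measurable H) :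
    ∫⁻ x, ∫⁻ y, F y * H (x - y) ∂μ ∂μ = (∫⁻ y, F y ∂μ) * ∫⁻ z, H z ∂μ := by
  have hmeas : Measurable (Function.uncurry fun x y => F y * H (x - y)) :=
    (hF.comp measurable_snd).mul (hH.comp (measurable_fst.sub measurable_snd))
  rw [lintegral_lintegral_swap hmeas.aemeasurable, ← lintegral_mul_const _ hF]
  refine lintegral_congr fun y => ?_
  have hHy : Measurable fun x => H (x - y) := hH.comp (measurable_sub_const y)
  rw [lintegral_const_mul _ hHy, lintegral_sub_right_eq_self]

variable {E : Type*} [NormedRing E] [NormMulClass E] [NormedSpace ℝ E] [MeasurableSpace E]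
  [OpensMeasurableSpace E]

theorem eLpNorm_integral_mul_sub_le {f g : G → E} (hf : Measurable f) (hg : Measurable g)
    {B : ℝ≥0∞} (hB : ∀ x, μ {y | f y ≠ 0 ∧ g (x - y) ≠ 0} ≤ B) :
    eLpNorm (fun x => ∫ y, f y * g (x - y) ∂μ) 2 μ ≤
      B ^ (1 / 2 : ℝ) * eLpNorm f 2 μ * eLpNorm g 2 μ := by
  have hpointwise : ∀ x, ‖∫ y, f y * g (x - y) ∂μ‖ₑ ^ 2 ≤
      B * ∫⁻ y, ‖f y‖ₑ ^ 2 * ‖g (x - y)‖ₑ ^ 2 ∂μ := fun x => calc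
    ‖∫ y, f y * g (x - y) ∂μ‖ₑ ^ 2 ≤ (∫⁻ y, ‖f y‖ₑ * ‖g (x - y)‖ₑ ∂μ) ^ 2 := by
        gcongr
        simpa only [enorm_mul] using enorm_integral_le_lintegral_enorm (fun y => f y * g (x - y))
    _ ≤ μ {y | f y ≠ 0 ∧ g (x - y) ≠ 0} * ∫⁻ y, (‖f y‖ₑ * ‖g (x - y)‖ₑ) ^ 2 ∂μ :=
        lintegral_sq_le_measure_mul_lintegral_sq
          (hf.enorm.mul (hg.comp (measurable_const.sub measurable_id)).enorm).aemeasurable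
          fun y hy => by simpa [not_or] using hy
    _ ≤ B * ∫⁻ y, ‖f y‖ₑ ^ 2 * ‖g (x - y)‖ₑ ^ 2 ∂μ := by
        simp only [mul_pow]
        gcongr
        exact hB x
  refine (ENNReal.pow_le_pow_left_iff two_ne_zero).mp ?_
  calc eLpNorm (fun x => ∫ y, f y * g (x - y) ∂μ) 2 μ ^ 2
      ≤ ∫⁻ x, B * ∫⁻ y, ‖f y‖ₑ ^ 2 * ‖g (x - y)‖ₑ ^ 2 ∂μ ∂μ := by
        rw [eLpNorm_two_pow_two]
        exact lintegral_mono hpointwise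
    _ = B * (eLpNorm f 2 μ ^ 2 * eLpNorm g 2 μ ^ 2) := by
        have hmeas : Measurable fun x => ∫⁻ y, ‖f y‖ₑ ^ 2 * ‖g (x - y)‖ₑ ^ 2 ∂μ :=
          (((hf.enorm.pow_const 2).comp measurable_snd).mul
            ((hg.enorm.pow_const 2).comp measurable_sub)).lintegral_prod_right'
        rw [lintegral_const_mul _ hmeas, lintegral_lintegral_mul_sub (hf.enorm.pow_const 2)
          (hg.enorm.pow_const 2), eLpNorm_two_pow_two, eLpNorm_two_pow_two]
    _ = (B ^ (1 / 2 : ℝ) * eLpNorm f 2 μ * eLpNorm g 2 μ) ^ 2 := by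
        have hB2 : (B ^ (1 / 2 : ℝ)) ^ 2 = B := by
          rw [← ENNReal.rpow_mul_natCast]
          norm_num
        rw [mul_pow, mul_pow, hB2, mul_assoc]

end Convolution

theorem measure_prod_prod_le_of_fibers {α β γ : Type*} [MeasurableSpace α] [MeasurableSpace β]
    [MeasurableSpace γ] {μ : Measure α} {ν : Measure β} {ρ : Measure γ} [SFinite μ] [SFinite ν]
    [SFinite ρ] {E : Set (α × β × γ)} (hE : MeasurableSet E) {K : Set β} {S : β → Set γ}
    {T : β → γ → Set α} {a b : ℝ≥0∞} (hT : ∀ ξ η, μ (T ξ η) ≤ a) (hS : ∀ ξ, ρ (S ξ) ≤ b)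
    (hsub : ∀ τ ξ η, (τ, ξ, η) ∈ E → ξ ∈ K ∧ η ∈ S ξ ∧ τ ∈ T ξ η) :
    μ.prod (ν.prod ρ) E ≤ a * b * ν K := by
  have hslice : ∀ ξ η, μ ((fun τ => (τ, ξ, η)) ⁻¹' E) ≤
      K.indicator (fun ξ => (S ξ).indicator (fun _ => a) η) ξ := by
    intro ξ η
    by_cases hne : ∃ τ, (τ, ξ, η) ∈ E
    · obtain ⟨τ₀, hτ₀⟩ := hne
      obtain ⟨hξ, hη, -⟩ := hsub τ₀ ξ η hτ₀
      rw [indicator_of_mem hξ, indicator_of_mem hη]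
      exact (measure_mono fun τ hτ => (hsub τ ξ η hτ).2.2).trans (hT ξ η)
    · push Not at hne
      simp [preimage, hne]
  have hfiber : ∀ ξ, ∫⁻ η, K.indicator (fun ξ => (S ξ).indicator (fun _ => a) η) ξ ∂ρ ≤
      K.indicator (fun _ => a * b) ξ := by
    intro ξ
    by_cases hξ : ξ ∈ K
    · simp only [indicator_of_mem hξ]
      exact (lintegral_indicator_const_le _ _).trans (by gcongr; exact hS ξ)
    · simp [hξ]
  rw [Measure.prod_apply_symm hE]
  calc ∫⁻ q, μ ((fun τ => (τ, q)) ⁻¹' E) ∂ν.prod ρ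
      ≤ ∫⁻ q, K.indicator (fun ξ => (S ξ).indicator (fun _ => a) q.2) q.1 ∂ν.prod ρ :=
        lintegral_mono fun q => hslice q.1 q.2
    _ ≤ ∫⁻ ξ, ∫⁻ η, K.indicator (fun ξ => (S ξ).indicator (fun _ => a) η) ξ ∂ρ ∂ν :=
        lintegral_prod_le _
    _ ≤ ∫⁻ ξ, K.indicator (fun _ => a * b) ξ ∂ν := lintegral_mono hfiber
    _ ≤ a * b * ν K := lintegral_indicator_const_le _ _

theorem volume_le_of_forall_abs_sub_le {S : Set ℝ} {r : ℝ} (h : ∀ s ∈ S, ∀ t ∈ S, |s - t| ≤ r) :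
    volume S ≤ ENNReal.ofReal r :=
  (Real.volume_le_diam S).trans <| ediam_le fun s hs t ht => by
    rw [edist_dist, Real.dist_eq]
    exact ENNReal.ofReal_le_ofReal (h s hs t ht)

theorem volume_closedBall_inter_closedBall_le (a b r s : ℝ) :
    volume (closedBall a r ∩ closedBall b s) ≤ ENNReal.ofReal (2 * min r s) := by
  rw [mul_min_of_nonneg _ _ zero_le_two, ENNReal.ofReal_min, ← Real.volume_closedBall,
    ← Real.volume_closedBall]
  exact le_min (measure_mono inter_subset_left) (measure_mono inter_subset_right)

/- On each sign class of `φ` the map `h` expands distances by at least `2σ`, so each class meets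
the preimage of an interval of length `2M` in a set of diameter at most `M / σ`. -/
theorem volume_setOf_abs_sub_le_and_le_abs_le {h φ : ℝ → ℝ}
    (h_sub : ∀ s t, h s - h t = (s - t) * (φ s + φ t)) (K M : ℝ) {σ : ℝ} (hσ : 0 < σ) :
    volume {t | |h t - K| ≤ M ∧ σ ≤ |φ t|} ≤ ENNReal.ofReal (2 * M / σ) := by
  have branch : ∀ T ⊆ {t | |h t - K| ≤ M}, (∀ s ∈ T, ∀ t ∈ T, 2 * σ ≤ |φ s + φ t|) →
      volume T ≤ ENNReal.ofReal (M / σ) := by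
    refine fun T hTM hT => volume_le_of_forall_abs_sub_le fun s hs t ht => ?_
    have hst : |s - t| * |φ s + φ t| ≤ 2 * M := by
      rw [← abs_mul, ← h_sub, show h s - h t = (h s - K) - (h t - K) by ring]
      have hsM : |h s - K| ≤ M := hTM hs
      have htM : |h t - K| ≤ M := hTM ht
      exact (abs_sub _ _).trans (by linarith)
    rw [le_div_iff₀ hσ]
    nlinarith [abs_nonneg (s - t), hT s hs t ht]
  have hpos := branch {t | |h t - K| ≤ M ∧ σ ≤ φ t} (fun t ht => ht.1) fun s hs t ht =>
    le_abs.mpr (Or.inl (by linarith [hs.2, ht.2]))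
  have hneg := branch {t | |h t - K| ≤ M ∧ φ t ≤ -σ} (fun t ht => ht.1) fun s hs t ht =>
    le_abs.mpr (Or.inr (by linarith [hs.2, ht.2]))
  calc volume {t | |h t - K| ≤ M ∧ σ ≤ |φ t|}
      ≤ volume ({t | |h t - K| ≤ M ∧ σ ≤ φ t} ∪ {t | |h t - K| ≤ M ∧ φ t ≤ -σ}) :=
        measure_mono fun t ⟨htM, htσ⟩ => (le_abs'.mp htσ).symm.imp (⟨htM, ·⟩) (⟨htM, ·⟩)
    _ ≤ ENNReal.ofReal (M / σ) + ENNReal.ofReal (M / σ) :=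
        (measure_union_le _ _).trans (add_le_add hpos hneg)
    _ = ENNReal.ofReal (2 * M / σ) := by
        rw [mul_div_assoc, ENNReal.ofReal_mul zero_le_two, ENNReal.ofReal_ofNat, two_mul]

theorem omegaKP_resonance_sub (α ξ ξ₀ η₀ s t : ℝ) :
    (omegaKP α ξ s + omegaKP α (ξ₀ - ξ) (η₀ - s)) - (omegaKP α ξ t + omegaKP α (ξ₀ - ξ) (η₀ - t)) =
      (s - t) * ((s / ξ - (η₀ - s) / (ξ₀ - ξ)) + (t / ξ - (η₀ - t) / (ξ₀ - ξ))) := by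
  simp only [omegaKP, div_eq_mul_inv]
  ring

theorem volume_interaction_le (α : ℝ) {c D L₁ L₂ Nmin a : ℝ} {f₁ f₂ : ℝ × ℝ × ℝ → ℝ}
    (hc : 0 < c) (hD : 0 < D) (hN : 0 ≤ Nmin) (hL₁ : 0 ≤ L₁) (hL₂ : 0 ≤ L₂)
    (hm₁ : Measurable f₁) (hm₂ : Measurable f₂)
    (hξ₁ : ∀ p ∈ Function.support f₁, p.2.1 ∈ Icc a (a + Nmin))
    (hsep : ∀ p ∈ Function.support f₁, ∀ q ∈ Function.support f₂,
      c * D ≤ |p.2.2 / p.2.1 - q.2.2 / q.2.1|)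
    (hmod₁ : ∀ p ∈ Function.support f₁, |p.1 - omegaKP α p.2.1 p.2.2| ≤ L₁)
    (hmod₂ : ∀ p ∈ Function.support f₂, |p.1 - omegaKP α p.2.1 p.2.2| ≤ L₂)
    (x : ℝ × ℝ × ℝ) :
    volume {y | f₁ y ≠ 0 ∧ f₂ (x - y) ≠ 0} ≤
      ENNReal.ofReal (8 / c * Nmin * min L₁ L₂ * (max L₁ L₂ / D)) := by
  obtain ⟨τ₀, ξ₀, η₀⟩ := x
  have hE : MeasurableSet {y | f₁ y ≠ 0 ∧ f₂ ((τ₀, ξ₀, η₀) - y) ≠ 0} :=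
    (hm₁ (measurableSet_singleton 0).compl).inter
      ((hm₂.comp (measurable_const_sub _)) (measurableSet_singleton 0).compl)
  have hfiber : ∀ τ ξ η, (τ, ξ, η) ∈ {y | f₁ y ≠ 0 ∧ f₂ ((τ₀, ξ₀, η₀) - y) ≠ 0} →
      ξ ∈ Icc a (a + Nmin) ∧
      η ∈ {t | |omegaKP α ξ t + omegaKP α (ξ₀ - ξ) (η₀ - t) - τ₀| ≤ L₁ + L₂ ∧
        c * D ≤ |t / ξ - (η₀ - t) / (ξ₀ - ξ)|} ∧
      τ ∈ closedBall (omegaKP α ξ η) L₁ ∩ closedBall (τ₀ - omegaKP α (ξ₀ - ξ) (η₀ - η)) L₂ := by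
    rintro τ ξ η ⟨h₁, h₂⟩
    have hmod₁' := hmod₁ _ h₁
    have hmod₂' := hmod₂ _ h₂
    have hsep' := hsep _ h₁ _ h₂
    simp only [Prod.mk_sub_mk] at hmod₁' hmod₂' hsep'
    refine ⟨hξ₁ _ h₁, ⟨?_, hsep'⟩, ?_, ?_⟩
    · rw [abs_le] at hmod₁' hmod₂' ⊢
      constructor <;> linarith
    · rwa [mem_closedBall, Real.dist_eq]
    · rwa [mem_closedBall, Real.dist_eq, abs_sub_comm, sub_right_comm]
  rw [Measure.volume_eq_prod, Measure.volume_eq_prod]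
  refine (measure_prod_prod_le_of_fibers hE
    (fun ξ η => volume_closedBall_inter_closedBall_le _ _ _ _)
    (fun ξ => volume_setOf_abs_sub_le_and_le_abs_le (omegaKP_resonance_sub α ξ ξ₀ η₀) τ₀
      (L₁ + L₂) (mul_pos hc hD)) hfiber).trans ?_
  rw [Real.volume_Icc, add_sub_cancel_left, ← ENNReal.ofReal_mul (by positivity),
    ← ENNReal.ofReal_mul (by positivity)]
  refine ENNReal.ofReal_le_ofReal ?_
  have hsum : L₁ + L₂ ≤ 2 * max L₁ L₂ := by
    linarith [le_max_left L₁ L₂, le_max_right L₁ L₂]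
  calc 2 * min L₁ L₂ * (2 * (L₁ + L₂) / (c * D)) * Nmin
      = 4 / c * Nmin * min L₁ L₂ * ((L₁ + L₂) / D) := by ring
    _ ≤ 4 / c * Nmin * min L₁ L₂ * (2 * max L₁ L₂ / D) := by gcongr
    _ = 8 / c * Nmin * min L₁ L₂ * (max L₁ L₂ / D) := by ring

/-- Bilinear Strichartz estimate for the KP-I dispersion on `ℝ²` (Proposition 4.1):
under localization of the `ξ`-supports to intervals of length at most `N_min`,
group-velocity separation `|η₁/ξ₁ − η₂/ξ₂| ≥ c D`, and modulation localization
`|τ − ω_α(ξ,η)| ≤ L_i`, the convolution obeys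
`‖f₁ ∗ f₂‖_{L²} ≤ C N_min^{1/2} L_min^{1/2} (L_max/D)^{1/2} ‖f₁‖_{L²} ‖f₂‖_{L²}`. -/
theorem bilinear_strichartz (α c : ℝ) (hc : 0 < c) :
    ∃ C > (0 : ℝ), ∀ (f₁ f₂ : ℝ × ℝ × ℝ → ℝ) (I₁ I₂ : Set ℝ) (Nmin D L₁ L₂ : ℝ),
      0 < Nmin → 0 < D → 0 < L₁ → 0 < L₂ →
      Measurable f₁ → Measurable f₂ →
      (∀ x, 0 ≤ f₁ x) → (∀ x, 0 ≤ f₂ x) →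
      MemLp f₁ 2 volume → MemLp f₂ 2 volume →
      (∃ a₁, I₁ ⊆ Set.Icc a₁ (a₁ + Nmin)) →
      (∃ a₂, I₂ ⊆ Set.Icc a₂ (a₂ + Nmin)) →
      (∀ p ∈ Function.support f₁, p.2.1 ∈ I₁) →
      (∀ p ∈ Function.support f₂, p.2.1 ∈ I₂) →
      (∀ p ∈ Function.support f₁, ∀ q ∈ Function.support f₂,
        c * D ≤ |p.2.2 / p.2.1 - q.2.2 / q.2.1|) →
      (∀ p ∈ Function.support f₁, |p.1 - omegaKP α p.2.1 p.2.2| ≤ L₁) →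
      (∀ p ∈ Function.support f₂, |p.1 - omegaKP α p.2.1 p.2.2| ≤ L₂) →
      eLpNorm (conv3 f₁ f₂) 2 volume ≤
        ENNReal.ofReal (C * Nmin ^ ((1 : ℝ) / 2) * (min L₁ L₂) ^ ((1 : ℝ) / 2) *
            (max L₁ L₂ / D) ^ ((1 : ℝ) / 2)) *
          eLpNorm f₁ 2 volume * eLpNorm f₂ 2 volume := by
  refine ⟨(8 / c) ^ (1 / 2 : ℝ), by positivity, ?_⟩
  intro f₁ f₂ I₁ I₂ Nmin D L₁ L₂ hN hD hL₁ hL₂ hm₁ hm₂ _ _ _ _ ⟨a₁, hI₁⟩ _ hξ₁ _ hsep hmod₁ hmod₂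
  have : (volume : Measure (ℝ × ℝ × ℝ)).IsAddRightInvariant := by
    rw [Measure.volume_eq_prod]
    exact Measure.prod.instIsAddRightInvariant
  refine (eLpNorm_integral_mul_sub_le hm₁ hm₂ fun x =>
    volume_interaction_le α hc hD hN.le hL₁.le hL₂.le hm₁ hm₂ (fun p hp => hI₁ (hξ₁ p hp))
      hsep hmod₁ hmod₂ x).trans_eq ?_
  rw [ENNReal.ofReal_rpow_of_nonneg (by positivity) (by norm_num), Real.mul_rpow, Real.mul_rpow,
    Real.mul_rpow] <;> positivity
end

section
/- Let α ≥ 1 and suppose ξ₁ ∈ [γ, 2γ], η₁ = 0, ξ₂ ∈ [N − γ, N], with N ≫ 1, γ ≪ 1, and η₂² = ((α+1)ξ_*^α − ξ₁^α) ξ₂(ξ₁^* + ξ₂) for appropriate points ξ₁^* ∈ [γ,2γ], ξ_* ∈ (ξ₂, ξ₂ + ξ₁^*). Then the KP-I resonance function satisfies |Ω_α(ξ₁,0,ξ₂,η₂)| ≤ C N^{α−1} γ², i.e., the resonance can be made as small as N^{α−1}γ² by choosing the transverse frequency η₂ to cancel the KdV resonance to leading order. -/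
open Real Set

/-! By the mean value theorem `(ξ₁ + ξ₂)^(α+1) - ξ₂^(α+1) = (α+1) c^α ξ₁` for some
`c ∈ (ξ₂, ξ₂ + ξ₁)`. With the tuned `η₂`, the resonance then splits as `(α+1) ξ₁ (c^α - ξ*^α)`
plus a term carrying the factor `(ξ₁ - ξ₁*) / (ξ₁ + ξ₂)`. The first is `O(N^(α-1) γ²)` since
`|c - ξ*| ≤ 2γ` and `x ↦ x^α` is `α (2N)^(α-1)`-Lipschitz on `[0, 2N]`; the second since
`|ξ₁ - ξ₁*| ≤ γ` and `ξ₁ + ξ₂ ≥ N`. -/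

lemma abs_rpow_sub_rpow_le {p M x y : ℝ} (hp : 1 ≤ p) (hx : x ∈ Icc 0 M) (hy : y ∈ Icc 0 M) :
    |x ^ p - y ^ p| ≤ p * M ^ (p - 1) * |x - y| := by
  have hderiv : ∀ z ∈ Icc 0 M,
      HasDerivWithinAt (fun z : ℝ => z ^ p) (p * z ^ (p - 1)) (Icc 0 M) z :=
    fun z _ => (hasDerivAt_rpow_const (Or.inr hp)).hasDerivWithinAt
  have hbound : ∀ z ∈ Icc 0 M, ‖p * z ^ (p - 1)‖ ≤ p * M ^ (p - 1) := fun z ⟨hz0, hzM⟩ => by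
    rw [Real.norm_of_nonneg (by positivity)]
    gcongr
  exact (convex_Icc 0 M).norm_image_sub_le_of_norm_hasDerivWithin_le hderiv hbound hy hx

lemma exists_rpow_add_sub_rpow_eq (p : ℝ) {a h : ℝ} (ha : 0 < a) (hh : 0 < h) :
    ∃ c ∈ Ioo a (a + h), (a + h) ^ p - a ^ p = p * c ^ (p - 1) * h := by
  have hcont : ContinuousOn (fun x : ℝ => x ^ p) (Icc a (a + h)) := fun x hx =>
    (continuousAt_rpow_const x p (Or.inl (ha.trans_le hx.1).ne')).continuousWithinAt
  have hderiv : ∀ x ∈ Ioo a (a + h), HasDerivAt (fun x : ℝ => x ^ p) (p * x ^ (p - 1)) x :=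
    fun x hx => hasDerivAt_rpow_const (Or.inl (ha.trans hx.1).ne')
  obtain ⟨c, hc, hslope⟩ := exists_hasDerivAt_eq_slope _ _ (by linarith) hcont hderiv
  refine ⟨c, hc, ?_⟩
  rw [hslope, add_sub_cancel_left, div_mul_cancel₀ _ hh.ne']

noncomputable def kpResonance (α ξ₁ η₁ ξ₂ η₂ : ℝ) : ℝ :=
  (ξ₁ + ξ₂) ^ (α + 1) - ξ₁ ^ (α + 1) - ξ₂ ^ (α + 1) -
    (η₁ * ξ₂ - η₂ * ξ₁) ^ 2 / (ξ₁ * ξ₂ * (ξ₁ + ξ₂))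

lemma kpResonance_zero_eq {α ξ₁ ξ₂ ξ₁s ξs η₂ c : ℝ} (hξ₁ : 0 < ξ₁) (hξ₂ : 0 < ξ₂)
    (hc : (ξ₂ + ξ₁) ^ (α + 1) - ξ₂ ^ (α + 1) = (α + 1) * c ^ α * ξ₁)
    (hη : η₂ ^ 2 = ((α + 1) * ξs ^ α - ξ₁ ^ α) * ξ₂ * (ξ₁s + ξ₂)) :
    kpResonance α ξ₁ 0 ξ₂ η₂ = (α + 1) * ξ₁ * (c ^ α - ξs ^ α) +
      ξ₁ * ((α + 1) * ξs ^ α - ξ₁ ^ α) * ((ξ₁ - ξ₁s) / (ξ₁ + ξ₂)) := by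
  have hsum : (ξ₁ + ξ₂) ^ (α + 1) = ξ₂ ^ (α + 1) + (α + 1) * c ^ α * ξ₁ := by
    rw [add_comm ξ₁]; linarith
  rw [kpResonance, hsum, rpow_add_one hξ₁.ne',
    show (0 * ξ₂ - η₂ * ξ₁) ^ 2 = η₂ ^ 2 * ξ₁ ^ 2 by ring, hη]
  field_simp
  ring

lemma abs_resonance_leading_le {α M γ ξ₁ c ξs : ℝ} (hα : 1 ≤ α) (hξ₁ : ξ₁ ∈ Icc 0 (2 * γ))
    (hc : c ∈ Icc 0 M) (hξs : ξs ∈ Icc 0 M) (hcξs : |c - ξs| ≤ 2 * γ) :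
    |(α + 1) * ξ₁ * (c ^ α - ξs ^ α)| ≤ 4 * α * (α + 1) * M ^ (α - 1) * γ ^ 2 := by
  obtain ⟨hξ₁0, hξ₁γ⟩ := hξ₁
  have hγ : 0 ≤ γ := by linarith
  have hM : 0 ≤ M ^ (α - 1) := rpow_nonneg (hc.1.trans hc.2) _
  have hlip : |c ^ α - ξs ^ α| ≤ α * M ^ (α - 1) * (2 * γ) :=
    (abs_rpow_sub_rpow_le hα hc hξs).trans (by gcongr)
  calc |(α + 1) * ξ₁ * (c ^ α - ξs ^ α)| = (α + 1) * ξ₁ * |c ^ α - ξs ^ α| := by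
        rw [abs_mul, abs_of_nonneg (by positivity)]
    _ ≤ (α + 1) * (2 * γ) * (α * M ^ (α - 1) * (2 * γ)) := by gcongr
    _ = 4 * α * (α + 1) * M ^ (α - 1) * γ ^ 2 := by ring

lemma abs_resonance_mismatch_le {α N γ ξ₁ ξ₁s ξ₂ ξs : ℝ} (hα : 0 ≤ α) (hN : 0 < N)
    (hξ₁ : ξ₁ ∈ Icc 0 (2 * γ)) (hξ₁N : ξ₁ ≤ 2 * N) (hξs : ξs ∈ Icc 0 (2 * N))
    (hξ₁ξ₁s : |ξ₁ - ξ₁s| ≤ γ) (hsum : N ≤ ξ₁ + ξ₂) :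
    |ξ₁ * ((α + 1) * ξs ^ α - ξ₁ ^ α) * ((ξ₁ - ξ₁s) / (ξ₁ + ξ₂))| ≤
      4 * (α + 2) * (2 * N) ^ (α - 1) * γ ^ 2 := by
  obtain ⟨hξ₁0, hξ₁γ⟩ := hξ₁
  have hγ : 0 ≤ γ := by linarith
  have hpow : |(α + 1) * ξs ^ α - ξ₁ ^ α| ≤ (α + 2) * (2 * N) ^ α := by
    have hs : ξs ^ α ≤ (2 * N) ^ α := rpow_le_rpow hξs.1 hξs.2 hα
    have h₁ : ξ₁ ^ α ≤ (2 * N) ^ α := rpow_le_rpow hξ₁0 hξ₁N hα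
    have : 0 ≤ ξs ^ α := rpow_nonneg hξs.1 α
    have : 0 ≤ ξ₁ ^ α := rpow_nonneg hξ₁0 α
    rw [abs_le]; constructor <;> nlinarith
  have hratio : |(ξ₁ - ξ₁s) / (ξ₁ + ξ₂)| ≤ γ / N := by
    rw [abs_div, abs_of_pos (hN.trans_le hsum)]
    gcongr
  calc |ξ₁ * ((α + 1) * ξs ^ α - ξ₁ ^ α) * ((ξ₁ - ξ₁s) / (ξ₁ + ξ₂))|
      ≤ 2 * γ * ((α + 2) * (2 * N) ^ α) * (γ / N) := by
        rw [abs_mul, abs_mul, abs_of_nonneg hξ₁0]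
        gcongr
    _ = 4 * (α + 2) * (2 * N) ^ (α - 1) * γ ^ 2 := by
        rw [rpow_sub_one (by positivity)]
        field_simp
        ring

/-- Smallness of the KP-I resonance under the tuned choice of the transverse frequency
`η₂` (Taylor-remainder bound from the C² ill-posedness construction on ℝ × 𝕋):
with `ξ₁, ξ₁* ∈ [γ,2γ]`, `ξ₂ ∈ [N−γ,N]`, `ξ* ∈ (ξ₂, ξ₂+ξ₁*)` and
`η₂² = ((α+1)ξ*^α − ξ₁^α) ξ₂(ξ₁*+ξ₂)`, one has `|Ω_α(ξ₁,0,ξ₂,η₂)| ≤ C N^{α−1} γ²`. -/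
theorem resonance_smallness (α : ℝ) (hα : 1 ≤ α) :
    ∃ C > (0 : ℝ), ∀ N γ ξ₁ ξ₂ ξ₁s ξs η₂ : ℝ,
      2 ≤ N → 0 < γ → γ ≤ 1 →
      ξ₁ ∈ Set.Icc γ (2 * γ) → ξ₁s ∈ Set.Icc γ (2 * γ) →
      ξ₂ ∈ Set.Icc (N - γ) N →
      ξs ∈ Set.Ioo ξ₂ (ξ₂ + ξ₁s) →
      η₂ ^ 2 = ((α + 1) * ξs ^ α - ξ₁ ^ α) * ξ₂ * (ξ₁s + ξ₂) →
      |(ξ₁ + ξ₂) ^ (α + 1) - ξ₁ ^ (α + 1) - ξ₂ ^ (α + 1) -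
          (0 * ξ₂ - η₂ * ξ₁) ^ 2 / (ξ₁ * ξ₂ * (ξ₁ + ξ₂))| ≤
        C * N ^ (α - 1) * γ ^ 2 := by
  refine ⟨4 * (α * (α + 1) + (α + 2)) * 2 ^ (α - 1), by positivity, ?_⟩
  rintro N γ ξ₁ ξ₂ ξ₁s ξs η₂ hN hγ hγ1 ⟨hξ₁l, hξ₁u⟩ ⟨hξ₁sl, hξ₁su⟩ ⟨hξ₂l, hξ₂u⟩
    ⟨hξsl, hξsu⟩ hη
  have hξ₁ : 0 < ξ₁ := by linarith
  have hξ₂ : 0 < ξ₂ := by linarith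
  obtain ⟨c, ⟨hcl, hcu⟩, hc⟩ := exists_rpow_add_sub_rpow_eq (α + 1) hξ₂ hξ₁
  rw [add_sub_cancel_right] at hc
  have hleading := abs_resonance_leading_le (M := 2 * N) (c := c) (ξs := ξs) hα
    ⟨hξ₁.le, hξ₁u⟩ ⟨by linarith, by linarith⟩ ⟨by linarith, by linarith⟩
    (abs_le.2 ⟨by linarith, by linarith⟩)
  have hmismatch := abs_resonance_mismatch_le (ξ₁s := ξ₁s) (ξ₂ := ξ₂) (ξs := ξs)
    (by linarith : 0 ≤ α) (by linarith : 0 < N) ⟨hξ₁.le, hξ₁u⟩ (by linarith)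
    ⟨by linarith, by linarith⟩ (abs_le.2 ⟨by linarith, by linarith⟩) (by linarith)
  change |kpResonance α ξ₁ 0 ξ₂ η₂| ≤ _
  rw [kpResonance_zero_eq hξ₁ hξ₂ hc hη]
  refine (abs_add_le _ _).trans ((add_le_add hleading hmismatch).trans_eq ?_)
  rw [mul_rpow zero_le_two (by linarith)]
  ring
end

section
/- Sharp lower bound exhibiting optimality of the torus Strichartz estimate: let û₀(ξ,η) = δ_{ξ,N} · 1_{[1,N^{1/2}]}(η) on ℤ × ℤ (a single x-frequency N and N^{1/2} consecutive y-frequencies). Then the free solution satisfies ‖S_α(t)u₀‖_{L⁴([0,1]×𝕋²)} ≳ N^{3/8} while ‖u₀‖_{L²(𝕋²)} ∼ N^{1/4}; hence the estimate ‖S_α(t)u₀‖_{L⁴_{t,x,y}([0,1]×𝕋²)} ≲ N^{1/8+ε}‖u₀‖_{L²} cannot hold with any exponent smaller than 1/8. -/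
open MeasureTheory

/-- The free evolution of the extremizing data `û₀(ξ,η) = δ_{ξ,N} 1_{[1,N^{1/2}]}(η)`
on the torus: a single `x`-frequency `N` and `⌊√N⌋` consecutive `y`-frequencies. -/
noncomputable def torusEx (α : ℝ) (N : ℕ) (t x y : ℝ) : ℂ :=
  ∑ η ∈ Finset.Icc 1 (Nat.floor (Real.sqrt N)),
    Complex.exp (Complex.I * ((N : ℝ) * x + (η : ℝ) * y + t * omegaKP α N η))

/-! Only the `y`-frequencies matter: the `x`-frequency `N` and the part `N|N|^α` of the dispersion
contribute a unimodular factor, so `|u(t,x,y)| = |∑_{η ≤ M} e^{i(ηy + tη²/N)}|` with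
`M = ⌊√N⌋ = Nat.sqrt N`. Orthogonality of the characters `e^{iηy}` on `[0, 2π]` gives
`‖u₀‖_{L²} = 2π √M ∼ N^{1/4}`. On the box `t ≤ 1/10`, `y ≤ 1/(10M)` every phase `ηy + tη²/N` lies
in `[0, 1/5]` (as `η² ≤ N`), so the `M` terms add up coherently: `|u| ≥ 9M/10` on a set of measure
`∼ 1/M`, whence `‖u‖_{L⁴} ≳ M · M^{-1/4} ∼ N^{3/8}`. Comparing the two powers of `N` rules out
every exponent below `1/8`. -/

open Complex Finset
open scoped Real

lemma integral_exp_int_mul_I (k : ℤ) :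
    ∫ y in (0 : ℝ)..2 * π, exp (k * y * I) = if k = 0 then ((2 * π : ℝ) : ℂ) else 0 := by
  split_ifs with hk
  · simp [hk]
  have hkI : (k : ℂ) * I ≠ 0 := mul_ne_zero (Int.cast_ne_zero.mpr hk) I_ne_zero
  simp_rw [mul_right_comm _ _ I]
  rw [integral_exp_mul_complex hkI, ofReal_mul, ofReal_ofNat,
    show (k : ℂ) * I * (2 * π) = k * (2 * π * I) by ring, exp_int_mul_two_pi_mul_I]
  simp

lemma integral_norm_sum_exp_sq {ι : Type*} (s : Finset ι) (k : ι → ℤ) (hk : Set.InjOn k s) :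
    ∫ y in (0 : ℝ)..2 * π, ‖∑ i ∈ s, exp (k i * y * I)‖ ^ 2 = 2 * π * #s := by
  have hsq (y : ℝ) : ((‖∑ i ∈ s, exp (k i * y * I)‖ ^ 2 : ℝ) : ℂ) =
      ∑ i ∈ s, ∑ j ∈ s, exp ((k i - k j : ℤ) * y * I) := by
    rw [ofReal_pow, ← mul_conj', map_sum, sum_mul_sum]
    refine sum_congr rfl fun i _ => sum_congr rfl fun j _ => ?_
    rw [← exp_conj, ← Complex.exp_add]
    simp only [map_mul, conj_I, conj_ofReal, map_intCast]
    push_cast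
    ring_nf
  apply Complex.ofReal_injective
  rw [← intervalIntegral.integral_ofReal]
  simp_rw [hsq]
  have hint {f : ℝ → ℂ} (hf : Continuous f) : IntervalIntegrable f volume 0 (2 * π) :=
    hf.intervalIntegrable _ _
  rw [intervalIntegral.integral_finsetSum fun i _ => hint (by fun_prop)]
  have hrow (i : ι) (hi : i ∈ s) :
      ∫ y in (0 : ℝ)..2 * π, ∑ j ∈ s, exp ((k i - k j : ℤ) * y * I) = ((2 * π : ℝ) : ℂ) := by
    rw [intervalIntegral.integral_finsetSum fun j _ => hint (by fun_prop)]
    simp_rw [integral_exp_int_mul_I, sub_eq_zero]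
    rw [sum_eq_single_of_mem i hi fun j hj hji => if_neg fun h => hji (hk hj hi h.symm), if_pos rfl]
  rw [sum_congr rfl hrow]
  simp
  ring

lemma nine_div_ten_le_cos {θ : ℝ} (h : |θ| ≤ 1 / 5) : 9 / 10 ≤ Real.cos θ := by
  have : θ ^ 2 ≤ 1 / 25 := by nlinarith [sq_abs θ, abs_nonneg θ]
  linarith [Real.one_sub_sq_div_two_le_cos (x := θ)]

lemma mul_card_le_norm_sum_exp {ι : Type*} (s : Finset ι) (θ : ι → ℝ) {c : ℝ}
    (h : ∀ i ∈ s, c ≤ Real.cos (θ i)) : c * #s ≤ ‖∑ i ∈ s, exp (θ i * I)‖ :=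
  calc c * #s = ∑ i ∈ s, c := by rw [sum_const, nsmul_eq_mul, mul_comm]
    _ ≤ ∑ i ∈ s, Real.cos (θ i) := sum_le_sum h
    _ = (∑ i ∈ s, exp (θ i * I)).re := by simp [re_sum, exp_ofReal_mul_I_re]
    _ ≤ _ := re_le_norm _

lemma ofReal_mul_measure_rpow_le_eLpNorm {X E : Type*} [MeasurableSpace X] [NormedAddCommGroup E]
    {μ : Measure X} {p : ENNReal} {f : X → E} {s : Set X} {c : ℝ} (hs : MeasurableSet s)
    (hp : p ≠ 0) (hp_top : p ≠ ⊤) (hf : ∀ x ∈ s, c ≤ ‖f x‖) :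
    ENNReal.ofReal c * μ s ^ (1 / p.toReal) ≤ eLpNorm f p μ := by
  rcases le_total c 0 with hc | hc
  · simp [ENNReal.ofReal_of_nonpos hc]
  calc ENNReal.ofReal c * μ s ^ (1 / p.toReal) = eLpNorm (s.indicator fun _ => c) p μ := by
        rw [eLpNorm_indicator_const hs hp hp_top, Real.enorm_of_nonneg hc]
    _ ≤ eLpNorm f p μ := eLpNorm_mono fun x => by
        by_cases hx : x ∈ s <;> simp [hx, abs_of_nonneg hc, hf]

lemma rpow_one_div_four_pow_four {x : ℝ} (hx : 0 ≤ x) : (x ^ (1 / 4 : ℝ)) ^ 4 = x := by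
  rw [← Real.rpow_mul_natCast hx]; norm_num

lemma rpow_three_div_eight_div_ten_le {N M : ℝ} (hN : 0 ≤ N) (hM : 1 ≤ M)
    (hNM : N ≤ 4 * M ^ 2) :
    N ^ (3 / 8 : ℝ) / 10 ≤ 9 / 10 * M * (π / (50 * M)) ^ (1 / 4 : ℝ) := by
  set u := N ^ (3 / 8 : ℝ)
  have hu : (u ^ 4) ^ 2 ≤ (8 * M ^ 3) ^ 2 := by
    rw [← pow_mul, ← Real.rpow_mul_natCast hN,
      show (3 / 8 : ℝ) * ((4 * 2 : ℕ) : ℝ) = (3 : ℕ) by norm_num, Real.rpow_natCast]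
    calc N ^ 3 ≤ (4 * M ^ 2) ^ 3 := by gcongr
      _ = (8 * M ^ 3) ^ 2 := by ring
  have hu4 : u ^ 4 ≤ 8 * M ^ 3 :=
    (pow_le_pow_iff_left₀ (by positivity) (by positivity) two_ne_zero).mp hu
  refine (pow_le_pow_iff_left₀ (by positivity) (by positivity) four_ne_zero).mp ?_
  rw [div_pow, mul_pow, rpow_one_div_four_pow_four (by positivity)]
  have hM3 : 0 < M ^ 3 := by positivity
  calc u ^ 4 / 10 ^ 4 ≤ 8 * M ^ 3 / 10 ^ 4 := by gcongr
    _ ≤ (9 / 10) ^ 4 * (3 / 50) * M ^ 3 := by nlinarith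
    _ ≤ (9 / 10) ^ 4 * (π / 50) * M ^ 3 := by gcongr; exact Real.pi_gt_three.le
    _ = (9 / 10 * M) ^ 4 * (π / (50 * M)) := by field_simp

lemma le_four_mul_sqrt_sq {N : ℕ} (hN : 1 ≤ N) : N ≤ 4 * Nat.sqrt N ^ 2 := by
  have h₁ := Nat.lt_succ_sqrt' N
  have h₂ := Nat.sqrt_pos.mpr hN
  nlinarith

lemma sqrt_pow_four {x : ℝ} (hx : 0 ≤ x) : √x ^ 4 = x ^ 2 := by
  rw [show 4 = 2 * 2 from rfl, pow_mul, Real.sq_sqrt hx]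

lemma sqrt_sqrt_le_rpow (N : ℕ) : √(Nat.sqrt N) ≤ (N : ℝ) ^ (1 / 4 : ℝ) := by
  refine (pow_le_pow_iff_left₀ (by positivity) (by positivity) four_ne_zero).mp ?_
  rw [sqrt_pow_four (by positivity), rpow_one_div_four_pow_four N.cast_nonneg]
  exact_mod_cast Nat.sqrt_le' N

lemma rpow_le_two_mul_sqrt_sqrt {N : ℕ} (hN : 1 ≤ N) :
    (N : ℝ) ^ (1 / 4 : ℝ) ≤ 2 * √(Nat.sqrt N) := by
  refine (pow_le_pow_iff_left₀ (by positivity) (by positivity) four_ne_zero).mp ?_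
  rw [mul_pow, sqrt_pow_four (by positivity), rpow_one_div_four_pow_four N.cast_nonneg]
  have : (N : ℝ) ≤ 4 * Nat.sqrt N ^ 2 := by exact_mod_cast le_four_mul_sqrt_sq hN
  linarith

lemma norm_torusEx (α : ℝ) (N : ℕ) (t x y : ℝ) :
    ‖torusEx α N t x y‖ =
      ‖∑ η ∈ Icc 1 (Nat.sqrt N), exp ((η * y + t * η ^ 2 / N : ℝ) * I)‖ := by
  have hsplit (η : ℕ) : exp (I * ((N : ℝ) * x + (η : ℝ) * y + t * omegaKP α N η)) =
      exp (((N * x + t * (N * |(N : ℝ)| ^ α) : ℝ)) * I) *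
        exp ((η * y + t * η ^ 2 / N : ℝ) * I) := by
    rw [← Complex.exp_add, omegaKP]
    push_cast
    ring_nf
  simp_rw [torusEx, Real.nat_floor_real_sqrt_eq_nat_sqrt, hsplit, ← mul_sum, norm_mul,
    norm_exp_ofReal_mul_I, one_mul]

lemma le_norm_torusEx (α : ℝ) (N : ℕ) {t x y : ℝ} (ht₀ : 0 ≤ t) (ht₁ : t ≤ 1 / 10)
    (hy₀ : 0 ≤ y) (hy₁ : y ≤ 1 / (10 * Nat.sqrt N)) :
    9 / 10 * (Nat.sqrt N : ℝ) ≤ ‖torusEx α N t x y‖ := by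
  rw [norm_torusEx]
  convert mul_card_le_norm_sum_exp _ _ fun η hη => nine_div_ten_le_cos ?_ using 2
  · simp
  obtain ⟨hη₁, hηM⟩ := mem_Icc.mp hη
  have hM : (1 : ℝ) ≤ Nat.sqrt N := by exact_mod_cast hη₁.trans hηM
  have hηN : (η : ℝ) ^ 2 ≤ N := by exact_mod_cast (Nat.pow_le_pow_left hηM 2).trans (Nat.sqrt_le' N)
  have hN : (0 : ℝ) < N := by exact_mod_cast hη₁.trans (hηM.trans (Nat.sqrt_le_self N))
  have hy : η * y ≤ 1 / 10 := by
    calc (η : ℝ) * y ≤ Nat.sqrt N * (1 / (10 * Nat.sqrt N)) := by gcongr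
      _ = 1 / 10 := by field_simp
  have ht : t * η ^ 2 / N ≤ 1 / 10 := by
    rw [mul_div_assoc]
    calc t * (η ^ 2 / N) ≤ 1 / 10 * 1 := by gcongr; exact (div_le_one hN).mpr hηN
      _ = 1 / 10 := by norm_num
  rw [abs_of_nonneg (by positivity)]
  linarith

lemma integral_norm_torusEx_zero_sq (α : ℝ) (N : ℕ) (x : ℝ) :
    ∫ y in Set.Icc 0 (2 * π), ‖torusEx α N 0 x y‖ ^ 2 = 2 * π * Nat.sqrt N := by
  rw [integral_Icc_eq_integral_Ioc, ← intervalIntegral.integral_of_le (by positivity)]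
  simp_rw [norm_torusEx, zero_mul, zero_div, add_zero]
  convert integral_norm_sum_exp_sq (Icc 1 (Nat.sqrt N)) (fun η : ℕ => (η : ℤ))
    Nat.cast_injective.injOn using 1
  · simp
  · simp

lemma eLpNorm_torusEx_zero (α : ℝ) (N : ℕ) :
    eLpNorm (fun z : ℝ × ℝ => torusEx α N 0 z.1 z.2) 2
        (volume.restrict (Set.Icc 0 (2 * π) ×ˢ Set.Icc 0 (2 * π))) =
      ENNReal.ofReal (2 * π * √(Nat.sqrt N)) := by
  have hcont : Continuous fun z : ℝ × ℝ => ‖torusEx α N 0 z.1 z.2‖ ^ 2 := by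
    unfold torusEx; fun_prop
  have hint : IntegrableOn (fun z : ℝ × ℝ => ‖torusEx α N 0 z.1 z.2‖ ^ 2)
      (Set.Icc 0 (2 * π) ×ˢ Set.Icc 0 (2 * π)) :=
    hcont.continuousOn.integrableOn_compact (isCompact_Icc.prod isCompact_Icc)
  have hmem : MemLp (fun z : ℝ × ℝ => torusEx α N 0 z.1 z.2) 2
      (volume.restrict (Set.Icc 0 (2 * π) ×ˢ Set.Icc 0 (2 * π))) :=
    (memLp_two_iff_integrable_sq_norm (by unfold torusEx; fun_prop)).mpr hint
  rw [hmem.eLpNorm_eq_integral_rpow_norm two_ne_zero ENNReal.ofNat_ne_top]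
  simp only [ENNReal.toReal_ofNat, Real.rpow_two]
  rw [Measure.volume_eq_prod, setIntegral_prod _ hint]
  simp_rw [integral_norm_torusEx_zero_sq, setIntegral_const, Measure.real, Real.volume_Icc,
    sub_zero]
  rw [ENNReal.toReal_ofReal (by positivity), inv_eq_one_div, ← Real.sqrt_eq_rpow, smul_eq_mul,
    ← mul_assoc, Real.sqrt_mul (by positivity), Real.sqrt_mul_self (by positivity)]

lemma le_eLpNorm_torusEx (α : ℝ) {N : ℕ} (hN : 1 ≤ N) :
    ENNReal.ofReal (N ^ (3 / 8 : ℝ) / 10) ≤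
      eLpNorm (fun z : ℝ × ℝ × ℝ => torusEx α N z.1 z.2.1 z.2.2) 4
        (volume.restrict (Set.Icc 0 1 ×ˢ Set.Icc 0 (2 * π) ×ˢ Set.Icc 0 (2 * π))) := by
  set M := Nat.sqrt N
  have hM : (1 : ℝ) ≤ M := by exact_mod_cast Nat.sqrt_pos.mpr hN
  have hNM : (N : ℝ) ≤ 4 * M ^ 2 := by exact_mod_cast le_four_mul_sqrt_sq hN
  set R := Set.Icc (0 : ℝ) (1 / 10) ×ˢ Set.Icc 0 (2 * π) ×ˢ Set.Icc 0 (1 / (10 * (M : ℝ)))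
  have hRS : R ⊆ Set.Icc 0 1 ×ˢ Set.Icc 0 (2 * π) ×ˢ Set.Icc 0 (2 * π) := by
    have : 1 / (10 * (M : ℝ)) ≤ 2 * π := by
      rw [div_le_iff₀ (by positivity)]; nlinarith [Real.pi_gt_three]
    exact Set.prod_mono (Set.Icc_subset_Icc le_rfl (by norm_num))
      (Set.prod_mono le_rfl (Set.Icc_subset_Icc le_rfl this))
  have hR : volume.restrict (Set.Icc (0 : ℝ) 1 ×ˢ Set.Icc 0 (2 * π) ×ˢ Set.Icc 0 (2 * π)) R =
      ENNReal.ofReal (π / (50 * M)) := by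
    rw [Measure.restrict_apply (by measurability), Set.inter_eq_left.mpr hRS,
      Measure.volume_eq_prod, Measure.prod_prod, Measure.volume_eq_prod, Measure.prod_prod,
      Real.volume_Icc, Real.volume_Icc, Real.volume_Icc, sub_zero, sub_zero, sub_zero,
      ← ENNReal.ofReal_mul (by positivity), ← ENNReal.ofReal_mul (by positivity)]
    congr 1
    field_simp
    ring
  calc ENNReal.ofReal (N ^ (3 / 8 : ℝ) / 10)
      ≤ ENNReal.ofReal (9 / 10 * M) *
          ENNReal.ofReal (π / (50 * M)) ^ (1 / (4 : ENNReal).toReal) := by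
        rw [ENNReal.ofReal_rpow_of_nonneg (by positivity) (by positivity),
          ← ENNReal.ofReal_mul (by positivity)]
        exact ENNReal.ofReal_le_ofReal
          (by simpa using rpow_three_div_eight_div_ten_le N.cast_nonneg hM hNM)
    _ ≤ _ := by
        rw [← hR]
        refine ofReal_mul_measure_rpow_le_eLpNorm (by measurability) four_ne_zero
          ENNReal.ofNat_ne_top ?_
        rintro ⟨t, x, y⟩ ⟨⟨ht₀, ht₁⟩, -, ⟨hy₀, hy₁⟩⟩
        exact le_norm_torusEx α N ht₀ ht₁ hy₀ hy₁

lemma eLpNorm_torusEx_zero_le (α : ℝ) (N : ℕ) :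
    eLpNorm (fun z : ℝ × ℝ => torusEx α N 0 z.1 z.2) 2
        (volume.restrict (Set.Icc 0 (2 * π) ×ˢ Set.Icc 0 (2 * π))) ≤
      ENNReal.ofReal (2 * π * (N : ℝ) ^ (1 / 4 : ℝ)) := by
  rw [eLpNorm_torusEx_zero]
  exact ENNReal.ofReal_le_ofReal (by gcongr; exact sqrt_sqrt_le_rpow N)

lemma le_eLpNorm_torusEx_zero (α : ℝ) {N : ℕ} (hN : 1 ≤ N) :
    ENNReal.ofReal (π * (N : ℝ) ^ (1 / 4 : ℝ)) ≤
      eLpNorm (fun z : ℝ × ℝ => torusEx α N 0 z.1 z.2) 2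
        (volume.restrict (Set.Icc 0 (2 * π) ×ˢ Set.Icc 0 (2 * π))) := by
  rw [eLpNorm_torusEx_zero]
  refine ENNReal.ofReal_le_ofReal ?_
  calc π * (N : ℝ) ^ (1 / 4 : ℝ) ≤ π * (2 * √(Nat.sqrt N)) := by
        gcongr; exact rpow_le_two_mul_sqrt_sqrt hN
    _ = 2 * π * √(Nat.sqrt N) := by ring

lemma exists_ofReal_mul_eLpNorm_torusEx_lt (α : ℝ) {s C : ℝ} (hs : s < 1 / 8) (hC : 0 < C) :
    ∃ N : ℕ, 2 ≤ N ∧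
      ENNReal.ofReal (C * (N : ℝ) ^ s) *
          eLpNorm (fun z : ℝ × ℝ => torusEx α N 0 z.1 z.2) 2
            (volume.restrict (Set.Icc 0 (2 * π) ×ˢ Set.Icc 0 (2 * π))) <
        eLpNorm (fun z : ℝ × ℝ × ℝ => torusEx α N z.1 z.2.1 z.2.2) 4
          (volume.restrict (Set.Icc 0 1 ×ˢ Set.Icc 0 (2 * π) ×ˢ Set.Icc 0 (2 * π))) := by
  obtain ⟨N, hNlarge, hN⟩ : ∃ N : ℕ, 20 * π * C < (N : ℝ) ^ (1 / 8 - s) ∧ 2 ≤ N :=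
    ((((tendsto_rpow_atTop (by linarith)).comp tendsto_natCast_atTop_atTop).eventually_gt_atTop
      _).and (Filter.eventually_ge_atTop 2)).exists
  have hNpos : (0 : ℝ) < N := by positivity
  have hsplit : (N : ℝ) ^ (3 / 8 : ℝ) = N ^ (1 / 8 - s) * (N ^ s * N ^ (1 / 4 : ℝ)) := by
    rw [← Real.rpow_add hNpos, ← Real.rpow_add hNpos]; ring_nf
  refine ⟨N, hN, ?_⟩
  calc _ ≤ ENNReal.ofReal (C * (N : ℝ) ^ s) * ENNReal.ofReal (2 * π * (N : ℝ) ^ (1 / 4 : ℝ)) := by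
        gcongr; exact eLpNorm_torusEx_zero_le α N
    _ = ENNReal.ofReal (C * (N : ℝ) ^ s * (2 * π * (N : ℝ) ^ (1 / 4 : ℝ))) :=
        (ENNReal.ofReal_mul (by positivity)).symm
    _ < ENNReal.ofReal (N ^ (3 / 8 : ℝ) / 10) := by
        refine (ENNReal.ofReal_lt_ofReal_iff (by positivity)).mpr ?_
        have hP : 0 < (N : ℝ) ^ s * N ^ (1 / 4 : ℝ) := by positivity
        rw [hsplit]
        nlinarith
    _ ≤ _ := le_eLpNorm_torusEx α (by omega)

/-- Sharpness of the torus Strichartz estimate: for the data `u₀` above one has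
`‖S_α(t)u₀‖_{L⁴([0,1]×𝕋²)} ≳ N^{3/8}` while `c N^{1/4} ≤ ‖u₀‖_{L²(𝕋²)} ≤ c⁻¹ N^{1/4}`;
consequently the estimate `‖S_α(t)u₀‖_{L⁴} ≲ N^{s}‖u₀‖_{L²}` fails for every `s < 1/8`. -/
theorem torus_strichartz_sharpness :
    ∃ c > (0 : ℝ), ∀ α : ℝ, 2 ≤ α →
      (∀ N : ℕ, 2 ≤ N →
        ENNReal.ofReal (c * (N : ℝ) ^ ((3 : ℝ) / 8)) ≤
          eLpNorm (fun z : ℝ × ℝ × ℝ => torusEx α N z.1 z.2.1 z.2.2) 4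
            (volume.restrict
              (Set.Icc (0 : ℝ) 1 ×ˢ Set.Icc (0 : ℝ) (2 * Real.pi) ×ˢ
                Set.Icc (0 : ℝ) (2 * Real.pi))) ∧
        eLpNorm (fun z : ℝ × ℝ => torusEx α N 0 z.1 z.2) 2
            (volume.restrict
              (Set.Icc (0 : ℝ) (2 * Real.pi) ×ˢ Set.Icc (0 : ℝ) (2 * Real.pi))) ≤
          ENNReal.ofReal (c⁻¹ * (N : ℝ) ^ ((1 : ℝ) / 4)) ∧
        ENNReal.ofReal (c * (N : ℝ) ^ ((1 : ℝ) / 4)) ≤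
          eLpNorm (fun z : ℝ × ℝ => torusEx α N 0 z.1 z.2) 2
            (volume.restrict
              (Set.Icc (0 : ℝ) (2 * Real.pi) ×ˢ Set.Icc (0 : ℝ) (2 * Real.pi)))) ∧
      ∀ s C : ℝ, s < 1 / 8 → 0 < C → ∃ N : ℕ, 2 ≤ N ∧
        ENNReal.ofReal (C * (N : ℝ) ^ s) *
            eLpNorm (fun z : ℝ × ℝ => torusEx α N 0 z.1 z.2) 2
              (volume.restrict
                (Set.Icc (0 : ℝ) (2 * Real.pi) ×ˢ Set.Icc (0 : ℝ) (2 * Real.pi))) <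
          eLpNorm (fun z : ℝ × ℝ × ℝ => torusEx α N z.1 z.2.1 z.2.2) 4
            (volume.restrict
              (Set.Icc (0 : ℝ) 1 ×ˢ Set.Icc (0 : ℝ) (2 * Real.pi) ×ˢ
                Set.Icc (0 : ℝ) (2 * Real.pi))) := by
  refine ⟨1 / 10, by norm_num, fun α _ =>
    ⟨fun N hN => ⟨?_, ?_, ?_⟩, fun s C hs hC => exists_ofReal_mul_eLpNorm_torusEx_lt α hs hC⟩⟩
  · convert le_eLpNorm_torusEx α (by omega : 1 ≤ N) using 2
    ring
  · refine (eLpNorm_torusEx_zero_le α N).trans (ENNReal.ofReal_le_ofReal ?_)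
    have : (0 : ℝ) ≤ (N : ℝ) ^ (1 / 4 : ℝ) := by positivity
    nlinarith [Real.pi_lt_four]
  · refine (ENNReal.ofReal_le_ofReal ?_).trans (le_eLpNorm_torusEx_zero α (by omega))
    have : (0 : ℝ) ≤ (N : ℝ) ^ (1 / 4 : ℝ) := by positivity
    nlinarith [Real.pi_gt_three]
end
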